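/- Let P1000(k) = 3^(k-1), and let P909, P727 satisfy P909(1) = 1, P727(1) = 1, P727(2) = 3, P909(k+1) = P727(k) + 2*P1000(k) for k ≥ 1, and P727(k+1) = P909(k) + 2*P909(k-1) + 2*P1000(k-1) for k ≥ 2. Then P727(k)/3^(k-1) tends to 8/11 as k → ∞. -/

import Mathlib

/-!
Eliminating `P909` and `P1000` leaves the single recurrence
`a (n + 3) = a (n + 1) + 2 a n + 16 · 3 ^ n` for `a n = P727 (n + 1)`, whose particular solution
is `(8 / 11) · 3 ^ n` (as `27 c = 3 c + 2 c + 16` forces `c = 8 / 11`). The error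
`a n - (8 / 11) · 3 ^ n` solves the homogeneous recurrence, and the triangle inequality in that
recurrence bounds it by `2 ^ n = o(3 ^ n)`.
-/

open Filter Topology

theorem abs_le_two_pow_of_recurrence (e : ℕ → ℝ) (hrec : ∀ n, e (n + 3) = e (n + 1) + 2 * e n)
    (h0 : |e 0| ≤ 1) (h1 : |e 1| ≤ 2) (h2 : |e 2| ≤ 4) (n : ℕ) : |e n| ≤ 2 ^ n := by
  induction n using Nat.strong_induction_on with
  | _ n ih =>
    match n, ih with
    | 0, _ => simpa using h0
    | 1, _ => simpa using h1
    | 2, _ => norm_num [h2]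
    | n + 3, ih =>
      have hn1 := ih (n + 1) (by omega)
      have hn := ih n (by omega)
      calc |e (n + 3)| ≤ |e (n + 1)| + 2 * |e n| := by
            rw [hrec]; exact (abs_add_le _ _).trans_eq (by rw [abs_mul, abs_two])
        _ ≤ 2 ^ (n + 1) + 2 * 2 ^ n := by gcongr
        _ = 2 ^ (n + 2) := by ring
        _ ≤ 2 ^ (n + 3) := pow_le_pow_right₀ one_le_two (by omega)

theorem tendsto_div_pow_of_abs_sub_le (u : ℕ → ℝ) {c r s : ℝ} (hs : 0 ≤ s) (hsr : s < r)
    (h : ∀ n, |u n - c * r ^ n| ≤ s ^ n) : Tendsto (fun n => u n / r ^ n) atTop (𝓝 c) := by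
  have hr : 0 < r := hs.trans_lt hsr
  have hratio : Tendsto (fun n => (s / r) ^ n) atTop (𝓝 0) :=
    tendsto_pow_atTop_nhds_zero_of_lt_one (div_nonneg hs hr.le) ((div_lt_one hr).2 hsr)
  refine tendsto_iff_norm_sub_tendsto_zero.2 (squeeze_zero_norm (fun n => ?_) hratio)
  have hrn : 0 < r ^ n := pow_pos hr n
  have hdiff : u n / r ^ n - c = (u n - c * r ^ n) / r ^ n := by field_simp
  rw [norm_norm, Real.norm_eq_abs, hdiff, abs_div, abs_of_pos hrn, div_pow]
  exact div_le_div_of_nonneg_right (h n) hrn.le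

theorem tendsto_div_three_pow_of_recurrence (a : ℕ → ℕ) (h0 : a 0 = 1) (h1 : a 1 = 3)
    (h2 : a 2 = 7) (hrec : ∀ n, a (n + 3) = a (n + 1) + 2 * a n + 16 * 3 ^ n) :
    Tendsto (fun n => (a n : ℝ) / 3 ^ n) atTop (𝓝 (8 / 11)) := by
  have herror := abs_le_two_pow_of_recurrence (fun n => a n - 8 / 11 * 3 ^ n)
    (fun n => by simp only [hrec]; push_cast; ring)
    (by norm_num [h0, abs_le]) (by norm_num [h1, abs_le]) (by norm_num [h2, abs_le])
  exact tendsto_div_pow_of_abs_sub_le _ (by norm_num) (by norm_num) herror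

theorem disk_move_limit_727 (P1000 P909 P727 : ℕ → ℕ)
    (h1000 : ∀ k ≥ 1, P1000 k = 3 ^ (k - 1))
    (h909_1 : P909 1 = 1) (h727_1 : P727 1 = 1) (h727_2 : P727 2 = 3)
    (h909 : ∀ k ≥ 1, P909 (k + 1) = P727 k + 2 * P1000 k)
    (h727 : ∀ k ≥ 2, P727 (k + 1) = P909 k + 2 * P909 (k - 1) + 2 * P1000 (k - 1)) :
    Tendsto (fun k => (P727 k : ℝ) / (3 : ℝ) ^ (k - 1)) atTop (nhds (8 / 11)) := by
  have p1000 (n : ℕ) : P1000 (n + 1) = 3 ^ n := h1000 (n + 1) n.succ_pos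
  have p909 (n : ℕ) : P909 (n + 2) = P727 (n + 1) + 2 * 3 ^ n := by
    rw [h909 (n + 1) n.succ_pos, p1000]
  have h727_3 : P727 3 = 7 := by
    rw [h727 2 le_rfl, p909, h909_1, h727_1, show 2 - 1 = 0 + 1 from rfl, p1000]; rfl
  have hrec (n : ℕ) : P727 (n + 4) = P727 (n + 2) + 2 * P727 (n + 1) + 16 * 3 ^ n := by
    rw [h727 (n + 3) (by omega), show n + 3 - 1 = n + 1 + 1 from rfl, p909, p909, p1000, pow_succ]
    ring
  have hlim := tendsto_div_three_pow_of_recurrence (fun n => P727 (n + 1)) h727_1 h727_2 h727_3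
    hrec
  rw [← tendsto_add_atTop_iff_nat 1]
  simpa using hlim
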